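/- arXiv:1308.3860 — 2 statements merged into one kernel-verified Lean document; each statement's English description precedes it below -/
import Mathlib

section
/- Let p, q, r be positive integers and let M_{p,q,r} = ∑_{i=1}^p ∑_{j=1}^q ∑_{k=1}^r e_{i,j} ⊗ e_{j,k} ⊗ e_{k,i} ∈ ℂ^{p×q} ⊗ ℂ^{q×r} ⊗ ℂ^{r×p} be the matrix multiplication tensor. Then ‖M_{p,q,r}‖_⋆ = pqr and [M_{p,q,r}] = 1. -/
/-!
For a pure tensor `u = a ⊗ b ⊗ c` with `a, b, c` read as matrices `A, B, C`, `⟨M, u⟩` is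
`∑ a_{ij} b_{jk} c_{ki} = tr (A B C)`, and Cauchy–Schwarz applied to `A B`
and then to the pairing with `C` bounds it by `‖a‖ ‖b‖ ‖c‖ = ‖u‖`; the unit tensor
`e_{11} ⊗ e_{11} ⊗ e_{11}` attains the value `1`, so `[M] = 1`. Consequently, for any
decomposition `M = ∑ v_i` into pure tensors, `pqr = ‖M‖² = ∑ ⟨M, v_i⟩ ≤ ∑ ‖v_i‖`, and the `pqr`
unit terms defining `M` attain this bound.
-/

noncomputable section

open Finset

/-- The third-order tensor space `A ⊗ B ⊗ C` (spaces given by orthonormal bases indexed by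
`A`, `B`, `C`), modeled as `EuclideanSpace ℂ (A × B × C)`. -/
abbrev T3 (A B C : Type*) [Fintype A] [Fintype B] [Fintype C] : Type _ :=
  EuclideanSpace ℂ (A × B × C)

variable {A B C : Type*} [Fintype A] [Fintype B] [Fintype C]

/-- The pure tensor `a ⊗ b ⊗ c`. -/
def pure3 (a : A → ℂ) (b : B → ℂ) (c : C → ℂ) : T3 A B C :=
  WithLp.toLp 2 (fun x => a x.1 * b x.2.1 * c x.2.2)

/-- A pure tensor in `A ⊗ B ⊗ C`. -/
def IsPure3 (T : T3 A B C) : Prop :=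
  ∃ (a : A → ℂ) (b : B → ℂ) (c : C → ℂ), ∀ x : A × B × C, T x = a x.1 * b x.2.1 * c x.2.2

/-- Nuclear norm of a tensor. -/
def nuclearNorm3 (T : T3 A B C) : ℝ :=
  sInf {c : ℝ | ∃ (r : ℕ) (v : Fin r → T3 A B C),
    (∀ i, IsPure3 (v i)) ∧ T = ∑ i, v i ∧ c = ∑ i, ‖v i‖}

/-- `[S]_α`. -/
def bracket3 {κ : Type*} [Fintype κ] (S : κ → T3 A B C) (α : ℝ) : ℝ :=
  sSup {c : ℝ | ∃ u : T3 A B C, IsPure3 u ∧ ‖u‖ = 1 ∧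
    c = (∑ i, ‖(inner ℂ (S i) u : ℂ)‖ ^ α) ^ (1 / α)}

/-- The spectral norm `[T]`. -/
def spectral3 (T : T3 A B C) : ℝ :=
  sSup {c : ℝ | ∃ u : T3 A B C, IsPure3 u ∧ ‖u‖ = 1 ∧ c = ‖(inner ℂ T u : ℂ)‖}

/-- `t`-orthogonality of a tuple of unit tensors. -/
def TOrtho3 {κ : Type*} [Fintype κ] (S : κ → T3 A B C) (t : ℝ) : Prop :=
  (∀ i, ‖S i‖ = 1) ∧ bracket3 S (2 / t) = 1

/-- A diagonal singular value decomposition of `T`: `T = ∑ i, σ i • v i` where all `σ i > 0`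
and `(v i)` is a `2`-orthogonal family of pure tensors of unit length.  (The singular values
of `T` are the `σ i`, with multiplicities.) -/
def IsDSVD3 {κ : Type*} [Fintype κ] (T : T3 A B C) (σ : κ → ℝ) (v : κ → T3 A B C) : Prop :=
  (∀ i, 0 < σ i) ∧ (∀ i, IsPure3 (v i)) ∧ TOrtho3 v 2 ∧ T = ∑ i, (σ i : ℂ) • v i

/-- The standard basis vector `e_a`. -/
def std {A : Type*} [DecidableEq A] (a : A) : A → ℂ := fun x => if x = a then 1 else 0

/-- The matrix multiplication tensor
`M_{p,q,r} = ∑_{i,j,k} e_{i,j} ⊗ e_{j,k} ⊗ e_{k,i} ∈ ℂ^{p×q} ⊗ ℂ^{q×r} ⊗ ℂ^{r×p}`. -/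
def matMulTensor (p q r : ℕ) : T3 (Fin p × Fin q) (Fin q × Fin r) (Fin r × Fin p) :=
  ∑ i : Fin p, ∑ j : Fin q, ∑ k : Fin r,
    pure3 (std (i, j)) (std (j, k)) (std (k, i))

lemma norm_sum_mul_sq_le {ι 𝕜 : Type*} [Fintype ι] [RCLike 𝕜] (f g : ι → 𝕜) :
    ‖∑ i, f i * g i‖ ^ 2 ≤ (∑ i, ‖f i‖ ^ 2) * ∑ i, ‖g i‖ ^ 2 :=
  calc ‖∑ i, f i * g i‖ ^ 2 ≤ (∑ i, ‖f i‖ * ‖g i‖) ^ 2 := by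
        gcongr
        simpa only [norm_mul] using norm_sum_le univ fun i => f i * g i
    _ ≤ _ := sum_mul_sq_le_sq_mul_sq _ _ _

lemma norm_sum_cycle_sq_le {I J K : Type*} [Fintype I] [Fintype J] [Fintype K]
    (a : I × J → ℂ) (b : J × K → ℂ) (c : K × I → ℂ) :
    ‖∑ i, ∑ j, ∑ k, a (i, j) * b (j, k) * c (k, i)‖ ^ 2 ≤
      (∑ x, ‖a x‖ ^ 2) * (∑ y, ‖b y‖ ^ 2) * ∑ z, ‖c z‖ ^ 2 := by
  -- `d` is the matrix product `A * B`
  set d : I × K → ℂ := fun x => ∑ j, a (x.1, j) * b (j, x.2)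
  have hsum : ∑ i, ∑ j, ∑ k, a (i, j) * b (j, k) * c (k, i) = ∑ x, d x * c x.swap := by
    simp only [d, Fintype.sum_prod_type, Finset.sum_mul]
    exact Finset.sum_congr rfl fun i _ => Finset.sum_comm
  have hd : ∑ x, ‖d x‖ ^ 2 ≤ (∑ x, ‖a x‖ ^ 2) * ∑ y, ‖b y‖ ^ 2 :=
    calc ∑ x, ‖d x‖ ^ 2 ≤ ∑ x : I × K, (∑ j, ‖a (x.1, j)‖ ^ 2) * ∑ j, ‖b (j, x.2)‖ ^ 2 :=
          Finset.sum_le_sum fun x _ => norm_sum_mul_sq_le _ _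
      _ = (∑ x, ‖a x‖ ^ 2) * ∑ y, ‖b y‖ ^ 2 := by
          rw [Fintype.sum_prod_type, Fintype.sum_prod_type, Fintype.sum_prod_type_right,
            Finset.sum_mul_sum]
  have hc : ∑ x : I × K, ‖c x.swap‖ ^ 2 = ∑ z, ‖c z‖ ^ 2 :=
    Equiv.sum_comp (Equiv.prodComm I K) fun z => ‖c z‖ ^ 2
  calc _ = ‖∑ x : I × K, d x * c x.swap‖ ^ 2 := by rw [hsum]
    _ ≤ (∑ x, ‖d x‖ ^ 2) * ∑ x : I × K, ‖c x.swap‖ ^ 2 := norm_sum_mul_sq_le _ _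
    _ ≤ _ := by rw [hc]; gcongr

lemma isPure3_iff {T : T3 A B C} : IsPure3 T ↔ ∃ a b c, T = pure3 a b c :=
  exists₃_congr fun _ _ _ =>
    ⟨fun h => WithLp.ofLp_injective 2 (funext h), fun h x => by rw [h]; rfl⟩

lemma norm_pure3_sq (a : A → ℂ) (b : B → ℂ) (c : C → ℂ) :
    ‖pure3 a b c‖ ^ 2 = (∑ x, ‖a x‖ ^ 2) * (∑ y, ‖b y‖ ^ 2) * ∑ z, ‖c z‖ ^ 2 := by
  simp only [EuclideanSpace.norm_sq_eq, pure3, norm_mul, mul_pow, Fintype.sum_prod_type,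
    Finset.sum_mul_sum]
  simp only [Finset.sum_mul]
  exact Finset.sum_congr rfl fun x _ => Finset.sum_comm

lemma pure3_std [DecidableEq A] [DecidableEq B] [DecidableEq C] (a : A) (b : B) (c : C) :
    pure3 (std a) (std b) (std c) = EuclideanSpace.single (a, b, c) 1 := by
  ext x
  simp only [pure3, std, PiLp.toLp_apply, PiLp.single_apply, ite_zero_mul_ite_zero,
    Prod.ext_iff, and_assoc, mul_one]

lemma isPure3_single [DecidableEq A] [DecidableEq B] [DecidableEq C] (x : A × B × C) (t : ℂ) :
    IsPure3 (EuclideanSpace.single x t) := by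
  refine ⟨std x.1, std x.2.1, Pi.single x.2.2 t, fun y => ?_⟩
  simp only [std, Pi.single_apply, PiLp.single_apply, ite_zero_mul_ite_zero, Prod.ext_iff,
    and_assoc, one_mul]

lemma exists_sum_isPure3 (T : T3 A B C) :
    ∃ v : A × B × C → T3 A B C, (∀ x, IsPure3 (v x)) ∧ T = ∑ x, v x := by
  classical
  refine ⟨fun x => EuclideanSpace.single x (T x), fun x => isPure3_single x _, ?_⟩
  ext y
  simp

lemma exists_fin_pure_decomposition {ι : Type*} [Fintype ι] {v : ι → T3 A B C}
    (hv : ∀ i, IsPure3 (v i)) :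
    ∃ (r : ℕ) (w : Fin r → T3 A B C),
      (∀ i, IsPure3 (w i)) ∧ ∑ i, v i = ∑ i, w i ∧ ∑ i, ‖v i‖ = ∑ i, ‖w i‖ :=
  ⟨_, v ∘ (Fintype.equivFin ι).symm, fun _ => hv _,
    (Equiv.sum_comp _ _).symm, (Equiv.sum_comp _ (‖v ·‖)).symm⟩

lemma nuclearNorm3_sum_le {ι : Type*} [Fintype ι] {v : ι → T3 A B C} (hv : ∀ i, IsPure3 (v i)) :
    nuclearNorm3 (∑ i, v i) ≤ ∑ i, ‖v i‖ :=
  csInf_le ⟨0, by rintro _ ⟨r, w, -, -, rfl⟩; positivity⟩ (exists_fin_pure_decomposition hv)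

lemma norm_inner_le_nuclearNorm3 {S : T3 A B C} (hS : ∀ u, IsPure3 u → ‖inner ℂ S u‖ ≤ ‖u‖)
    (T : T3 A B C) : ‖inner ℂ S T‖ ≤ nuclearNorm3 T := by
  obtain ⟨v, hv, hT⟩ := exists_sum_isPure3 T
  refine le_csInf ⟨_, hT ▸ exists_fin_pure_decomposition hv⟩ ?_
  rintro _ ⟨r, w, hw, rfl, rfl⟩
  calc ‖inner ℂ S (∑ i, w i)‖ = ‖∑ i, inner ℂ S (w i)‖ := by rw [inner_sum]
    _ ≤ ∑ i, ‖inner ℂ S (w i)‖ := norm_sum_le _ _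
    _ ≤ ∑ i, ‖w i‖ := Finset.sum_le_sum fun i _ => hS _ (hw i)

lemma matMulTensor_eq_sum_single (p q r : ℕ) :
    matMulTensor p q r = ∑ i, ∑ j, ∑ k, EuclideanSpace.single ((i, j), (j, k), (k, i)) 1 := by
  simp only [matMulTensor, pure3_std]

lemma inner_matMulTensor (p q r : ℕ) (u : T3 (Fin p × Fin q) (Fin q × Fin r) (Fin r × Fin p)) :
    inner ℂ (matMulTensor p q r) u = ∑ i, ∑ j, ∑ k, u ((i, j), (j, k), (k, i)) := by
  simp [matMulTensor_eq_sum_single, EuclideanSpace.inner_single_left]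

lemma matMulTensor_apply (p q r : ℕ) (i : Fin p) (j : Fin q) (k : Fin r) :
    matMulTensor p q r ((i, j), (j, k), (k, i)) = 1 := by
  simp [matMulTensor_eq_sum_single, Pi.single_apply, Prod.ext_iff, ite_and]

lemma inner_matMulTensor_self (p q r : ℕ) :
    inner ℂ (matMulTensor p q r) (matMulTensor p q r) = p * q * r := by
  rw [inner_matMulTensor]
  simp [matMulTensor_apply, mul_assoc]

lemma norm_inner_matMulTensor_le {p q r : ℕ}
    {u : T3 (Fin p × Fin q) (Fin q × Fin r) (Fin r × Fin p)} (hu : IsPure3 u) :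
    ‖inner ℂ (matMulTensor p q r) u‖ ≤ ‖u‖ := by
  obtain ⟨a, b, c, rfl⟩ := isPure3_iff.1 hu
  refine (pow_le_pow_iff_left₀ (norm_nonneg _) (norm_nonneg _) two_ne_zero).1 ?_
  rw [norm_pure3_sq, inner_matMulTensor]
  exact norm_sum_cycle_sq_le a b c

lemma spectral3_matMulTensor {p q r : ℕ} (hp : 0 < p) (hq : 0 < q) (hr : 0 < r) :
    spectral3 (matMulTensor p q r) = 1 := by
  set x : (Fin p × Fin q) × (Fin q × Fin r) × (Fin r × Fin p) :=
    ((⟨0, hp⟩, ⟨0, hq⟩), (⟨0, hq⟩, ⟨0, hr⟩), (⟨0, hr⟩, ⟨0, hp⟩))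
  refine IsGreatest.csSup_eq ⟨⟨EuclideanSpace.single x 1, isPure3_single x 1, by simp, ?_⟩, ?_⟩
  · simp [x, EuclideanSpace.inner_single_right, matMulTensor_apply]
  · rintro _ ⟨u, hu, hu1, rfl⟩
    exact hu1 ▸ norm_inner_matMulTensor_le hu

lemma nuclearNorm3_matMulTensor_le (p q r : ℕ) :
    nuclearNorm3 (matMulTensor p q r) ≤ p * q * r := by
  have hM : matMulTensor p q r = ∑ t : Fin p × Fin q × Fin r,
      EuclideanSpace.single ((t.1, t.2.1), (t.2.1, t.2.2), (t.2.2, t.1)) (1 : ℂ) := by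
    simp only [matMulTensor_eq_sum_single, Fintype.sum_prod_type]
  calc _ ≤ ∑ t : Fin p × Fin q × Fin r,
        ‖EuclideanSpace.single ((t.1, t.2.1), (t.2.1, t.2.2), (t.2.2, t.1)) (1 : ℂ)‖ :=
        hM ▸ nuclearNorm3_sum_le fun t => isPure3_single _ _
    _ = p * q * r := by simp [mul_assoc]

/-- **Corollary 1.9.** `‖M_{p,q,r}‖⋆ = pqr` and `[M_{p,q,r}] = 1`. -/
theorem matMulTensor_nuclearNorm_spectralNorm (p q r : ℕ)
    (hp : 0 < p) (hq : 0 < q) (hr : 0 < r) :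
    nuclearNorm3 (matMulTensor p q r) = (p * q * r : ℝ) ∧
    spectral3 (matMulTensor p q r) = 1 := by
  refine ⟨le_antisymm (nuclearNorm3_matMulTensor_le p q r) ?_, spectral3_matMulTensor hp hq hr⟩
  calc (p * q * r : ℝ) = ‖inner ℂ (matMulTensor p q r) (matMulTensor p q r)‖ := by
        rw [inner_matMulTensor_self]; norm_cast
    _ ≤ nuclearNorm3 (matMulTensor p q r) :=
        norm_inner_le_nuclearNorm3 (fun _ => norm_inner_matMulTensor_le) _
end
end

section
/- Let n ≥ 1, let ζ = e^{2πi/n}, and let T_{C_n} = ∑_{i+j+k ≡ 0 mod n} x^i ⊗ x^j ⊗ x^k be the multiplication tensor of the group algebra of the cyclic group C_n = ⟨x⟩. Then the discrete Fourier transform decomposition T_{C_n} = ∑_{t=0}^{n-1} √n · (n^{-1/2} ∑_i ζ^{ti} x^i) ⊗ (n^{-1/2} ∑_j ζ^{tj} x^j) ⊗ (n^{-1/2} ∑_k ζ^{tk} x^k) is the unique diagonal singular value decomposition of T_{C_n}; in particular the singular values of T_{C_n} are √n with multiplicity n, and ‖T_{C_n}‖_⋆ = n√n. -/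
noncomputable section

open Finset

variable {A B C : Type*} [Fintype A] [Fintype B] [Fintype C]

/-- The multiplication tensor `T_{C_n} = ∑_{i+j+k ≡ 0 (mod n)} xⁱ ⊗ xʲ ⊗ xᵏ` of the group
algebra of the cyclic group `C_n`, whose orthonormal basis `x⁰, …, x^{n-1}` is indexed by
`ZMod n`. -/
def cycTensor (n : ℕ) [NeZero n] : T3 (ZMod n) (ZMod n) (ZMod n) :=
  WithLp.toLp 2 (fun x => if x.1 + x.2.1 + x.2.2 = 0 then 1 else 0)

/-- The normalized character vector `(1/√n) ∑_i ζ^{t i} xⁱ`, where `ζ = e^{2πi/n}`. -/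
def dftVec (n : ℕ) [NeZero n] (t : ZMod n) : ZMod n → ℂ :=
  fun i => Complex.exp (2 * Real.pi * Complex.I / n) ^ (t.val * i.val) / (Real.sqrt n : ℂ)

/-- The pure tensor appearing in the discrete Fourier transform decomposition of `T_{C_n}`. -/
def dftPure (n : ℕ) [NeZero n] (t : ZMod n) : T3 (ZMod n) (ZMod n) (ZMod n) :=
  pure3 (dftVec n t) (dftVec n t) (dftVec n t)

/-!
The Fourier basis `(e_t)` of `ℂC_n` is orthonormal and `T_{C_n} = √n ∑_t e_t ⊗ e_t ⊗ e_t`.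
For any orthonormal family `(e_t)` and vectors `a, b, c`, Cauchy–Schwarz and Bessel give
`∑_t |⟨e_t, a⟩ ⟨e_t, b⟩ ⟨e_t, c⟩| ≤ ‖a‖ ‖b‖ ‖c‖`, with equality only if at most one term is
nonzero. The inequality says that the cubes `e_t ⊗ e_t ⊗ e_t` are `2`-orthogonal, so they give a
DSVD, and that `[T_{C_n}] ≤ √n`.

For a second DSVD `T = ∑_j σ_j w_j`, write `c_{jt} = ⟨e_t^{⊗3}, w_j⟩`. Pairing `T` with a cube
gives `√n = ∑_j σ_j c_{jt}`; together with `σ_j ≤ [T] ≤ √n` and `∑_j |c_{jt}| ≤ 1` this forces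
`σ_j = √n`. Pairing `T` with `w_j` then gives `∑_t |c_{jt}| = 1 = ‖w_j‖`, the equality case above,
so `w_j` is one of the cubes. Finally, any DSVD `T = ∑ σ_i v_i` has nuclear norm `∑ σ_i`:
`Z = ∑ v_i` satisfies `|⟨Z, u⟩| ≤ ‖u‖` on pure tensors and `⟨Z, T⟩ = ∑ σ_i`.
-/

open Function

section PureTensors

variable {A B C : Type*} [Fintype A] [Fintype B] [Fintype C]

theorem inner_pure3 (a a' : EuclideanSpace ℂ A) (b b' : EuclideanSpace ℂ B)
    (c c' : EuclideanSpace ℂ C) :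
    inner ℂ (pure3 a b c) (pure3 a' b' c') = inner ℂ a a' * inner ℂ b b' * inner ℂ c c' := by
  simp only [pure3, PiLp.inner_apply, RCLike.inner_apply, Fintype.sum_prod_type, map_mul]
  rw [Finset.sum_mul_sum, Finset.sum_mul_sum]
  simp only [Finset.sum_mul]
  refine Finset.sum_congr rfl fun x _ => ?_
  rw [Finset.sum_comm]
  exact Finset.sum_congr rfl fun y _ => Finset.sum_congr rfl fun z _ => by ring

theorem norm_pure3 (a : EuclideanSpace ℂ A) (b : EuclideanSpace ℂ B) (c : EuclideanSpace ℂ C) :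
    ‖pure3 a b c‖ = ‖a‖ * ‖b‖ * ‖c‖ := by
  have h : ‖pure3 a b c‖ ^ 2 = (‖a‖ * ‖b‖ * ‖c‖) ^ 2 := by
    rw [@norm_sq_eq_re_inner ℂ, inner_pure3, inner_self_eq_norm_sq_to_K,
      inner_self_eq_norm_sq_to_K, inner_self_eq_norm_sq_to_K]
    norm_cast
    ring
  exact (sq_eq_sq₀ (norm_nonneg _) (by positivity)).1 h

theorem isPure3_pure3 (a : A → ℂ) (b : B → ℂ) (c : C → ℂ) : IsPure3 (pure3 a b c) :=
  ⟨a, b, c, fun _ => rfl⟩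

theorem IsPure3.exists_eq_pure3 {T : T3 A B C} (hT : IsPure3 T) :
    ∃ (a : EuclideanSpace ℂ A) (b : EuclideanSpace ℂ B) (c : EuclideanSpace ℂ C),
      T = pure3 a b c := by
  obtain ⟨a, b, c, h⟩ := hT
  exact ⟨WithLp.toLp 2 a, WithLp.toLp 2 b, WithLp.toLp 2 c, PiLp.ext h⟩

theorem IsPure3.smul {T : T3 A B C} (hT : IsPure3 T) (z : ℂ) : IsPure3 (z • T) := by
  obtain ⟨a, b, c, h⟩ := hT
  exact ⟨z • a, b, c, fun x => by simp [h, mul_assoc]⟩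

end PureTensors

section TwoOrthogonal

variable {A B C κ : Type*} [Fintype A] [Fintype B] [Fintype C] [Fintype κ] {S : κ → T3 A B C}

theorem tOrtho3_two_iff : TOrtho3 S 2 ↔ (∀ i, ‖S i‖ = 1) ∧
    sSup {c : ℝ | ∃ u : T3 A B C, IsPure3 u ∧ ‖u‖ = 1 ∧ c = ∑ i, ‖inner ℂ (S i) u‖} = 1 := by
  simp [TOrtho3, bracket3]

theorem TOrtho3.sum_norm_inner_le_one (h : TOrtho3 S 2) {u : T3 A B C} (hu : IsPure3 u)
    (hu1 : ‖u‖ = 1) : ∑ i, ‖inner ℂ (S i) u‖ ≤ 1 := by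
  obtain ⟨hS, hsup⟩ := tOrtho3_two_iff.1 h
  refine hsup ▸ le_csSup ⟨Fintype.card κ, ?_⟩ ⟨u, hu, hu1, rfl⟩
  rintro _ ⟨v, -, hv, rfl⟩
  calc ∑ i, ‖inner ℂ (S i) v‖ ≤ ∑ _i : κ, (1 : ℝ) :=
        Finset.sum_le_sum fun i _ => (norm_inner_le_norm _ _).trans_eq (by rw [hS i, hv, one_mul])
    _ = Fintype.card κ := by simp

theorem TOrtho3.sum_norm_inner_le (h : TOrtho3 S 2) {u : T3 A B C} (hu : IsPure3 u) :
    ∑ i, ‖inner ℂ (S i) u‖ ≤ ‖u‖ := by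
  rcases eq_or_ne u 0 with rfl | hu0
  · simp
  have hnorm : ‖u‖ ≠ 0 := norm_ne_zero_iff.2 hu0
  have hunit : ‖((‖u‖⁻¹ : ℝ) : ℂ) • u‖ = 1 := by
    rw [norm_smul, Complex.norm_real, norm_inv, norm_norm, inv_mul_cancel₀ hnorm]
  have h1 := h.sum_norm_inner_le_one (hu.smul _) hunit
  simp only [inner_smul_right, norm_mul, Complex.norm_real, norm_inv, norm_norm,
    ← Finset.mul_sum] at h1
  rwa [inv_mul_le_iff₀ (norm_pos_iff.2 hu0), mul_one] at h1

theorem tOrtho3_two_of_sum_norm_inner_le [Nonempty κ] (hS : ∀ i, ‖S i‖ = 1)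
    (hpure : ∀ i, IsPure3 (S i)) (hle : ∀ u, IsPure3 u → ∑ i, ‖inner ℂ (S i) u‖ ≤ ‖u‖) :
    TOrtho3 S 2 := by
  obtain ⟨i⟩ := ‹Nonempty κ›
  have hbdd : ∀ c ∈ {c : ℝ | ∃ u : T3 A B C, IsPure3 u ∧ ‖u‖ = 1 ∧
      c = ∑ i, ‖inner ℂ (S i) u‖}, c ≤ 1 := by
    rintro _ ⟨u, hu, hu1, rfl⟩
    exact hu1 ▸ hle u hu
  refine tOrtho3_two_iff.2 ⟨hS, le_antisymm (csSup_le ⟨_, S i, hpure i, hS i, rfl⟩ hbdd) ?_⟩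
  calc (1 : ℝ) = ‖inner ℂ (S i) (S i)‖ := by simp [inner_self_eq_norm_sq_to_K, hS i]
    _ ≤ ∑ j, ‖inner ℂ (S j) (S i)‖ :=
        Finset.single_le_sum (f := fun j => ‖inner ℂ (S j) (S i)‖)
          (fun j _ => norm_nonneg _) (Finset.mem_univ i)
    _ ≤ _ := le_csSup ⟨1, hbdd⟩ ⟨S i, hpure i, hS i, rfl⟩

theorem TOrtho3.orthonormal (h : TOrtho3 S 2) (hpure : ∀ i, IsPure3 (S i)) :
    Orthonormal ℂ S := by
  classical
  refine ⟨h.1, fun i j hij => norm_le_zero_iff.1 ?_⟩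
  have hjj : ‖inner ℂ (S j) (S j)‖ = 1 := by simp [inner_self_eq_norm_sq_to_K, h.1 j]
  have hpair := Finset.sum_le_sum_of_subset_of_nonneg (f := fun k => ‖inner ℂ (S k) (S j)‖)
    (Finset.subset_univ {i, j}) fun _ _ _ => norm_nonneg _
  rw [Finset.sum_pair hij] at hpair
  linarith [h.sum_norm_inner_le_one (hpure j) (h.1 j)]

end TwoOrthogonal

section DSVD

variable {A B C κ ι : Type*} [Fintype A] [Fintype B] [Fintype C] [Fintype κ] [Fintype ι]
  {T : T3 A B C}

theorem IsDSVD3.orthonormal {σ : κ → ℝ} {v : κ → T3 A B C} (h : IsDSVD3 T σ v) :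
    Orthonormal ℂ v :=
  h.2.2.1.orthonormal h.2.1

theorem IsDSVD3.inner_eq {σ : κ → ℝ} {v : κ → T3 A B C} (h : IsDSVD3 T σ v) (i : κ) :
    inner ℂ (v i) T = σ i := by
  rw [h.2.2.2]
  exact h.orthonormal.inner_right_fintype (fun i => (σ i : ℂ)) i

theorem IsDSVD3.norm_inner_le {s : ℝ} {v : ι → T3 A B C} (h : IsDSVD3 T (fun _ => s) v)
    (hs : 0 ≤ s) {u : T3 A B C} (hu : IsPure3 u) : ‖inner ℂ u T‖ ≤ s * ‖u‖ := by
  calc ‖inner ℂ u T‖ = ‖∑ i, (s : ℂ) * inner ℂ u (v i)‖ := by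
        rw [h.2.2.2, inner_sum]
        simp_rw [inner_smul_right]
    _ ≤ s * ∑ i, ‖inner ℂ (v i) u‖ := by
        refine (norm_sum_le _ _).trans_eq ?_
        simp [Finset.mul_sum, norm_inner_symm, abs_of_nonneg hs]
    _ ≤ s * ‖u‖ := by gcongr; exact h.2.2.1.sum_norm_inner_le hu

theorem nuclearNorm3_eq_of_le {v : ι → T3 A B C} (hv : ∀ i, IsPure3 (v i)) (hT : T = ∑ i, v i)
    (hmin : ∀ (r : ℕ) (w : Fin r → T3 A B C), (∀ k, IsPure3 (w k)) → T = ∑ k, w k →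
      ∑ i, ‖v i‖ ≤ ∑ k, ‖w k‖) :
    nuclearNorm3 T = ∑ i, ‖v i‖ := by
  have hmem : ∑ i, ‖v i‖ ∈ {c : ℝ | ∃ (r : ℕ) (w : Fin r → T3 A B C),
      (∀ i, IsPure3 (w i)) ∧ T = ∑ i, w i ∧ c = ∑ i, ‖w i‖} := by
    refine ⟨Fintype.card ι, v ∘ (Fintype.equivFin ι).symm, fun k => hv _, ?_, ?_⟩
    · rw [hT]
      exact (Equiv.sum_comp _ v).symm
    · exact (Equiv.sum_comp _ fun i => ‖v i‖).symm
  refine le_antisymm (csInf_le ⟨0, ?_⟩ hmem) (le_csInf ⟨_, hmem⟩ ?_)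
  · rintro _ ⟨r, w, -, -, rfl⟩
    exact Finset.sum_nonneg fun _ _ => norm_nonneg _
  · rintro _ ⟨r, w, hw, hTw, rfl⟩
    exact hmin r w hw hTw

theorem IsDSVD3.nuclearNorm3_eq {σ : κ → ℝ} {v : κ → T3 A B C} (h : IsDSVD3 T σ v) :
    nuclearNorm3 T = ∑ i, σ i := by
  have hnorm : ∀ i, ‖(σ i : ℂ) • v i‖ = σ i := fun i => by
    rw [norm_smul, h.2.2.1.1 i, mul_one, Complex.norm_real, Real.norm_of_nonneg (h.1 i).le]
  have hsum : ∑ i, ‖(σ i : ℂ) • v i‖ = ∑ i, σ i := Finset.sum_congr rfl fun i _ => hnorm i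
  rw [← hsum]
  refine nuclearNorm3_eq_of_le (fun i => (h.2.1 i).smul _) h.2.2.2 fun r w hw hTw => ?_
  rw [hsum]
  calc ∑ i, σ i = (∑ i, ∑ k, inner ℂ (v i) (w k)).re := by
        simp_rw [← inner_sum, ← hTw, h.inner_eq, Complex.re_sum, Complex.ofReal_re]
    _ ≤ ∑ i, ∑ k, ‖inner ℂ (v i) (w k)‖ := (Complex.re_le_norm _).trans <|
        (norm_sum_le _ _).trans <| Finset.sum_le_sum fun i _ => norm_sum_le _ _
    _ = ∑ k, ∑ i, ‖inner ℂ (v i) (w k)‖ := Finset.sum_comm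
    _ ≤ ∑ k, ‖w k‖ := Finset.sum_le_sum fun k _ => h.2.2.1.sum_norm_inner_le (hw k)

theorem IsDSVD3.exists_inner_ne_zero {σ : ι → ℝ} {v : ι → T3 A B C} {τ : κ → ℝ}
    {w : κ → T3 A B C} (hv : IsDSVD3 T σ v) (hw : IsDSVD3 T τ w) (j : κ) :
    ∃ t, inner ℂ (v t) (w j) ≠ 0 := by
  by_contra! h0
  have hτ : (τ j : ℂ) = 0 := by
    rw [← hw.inner_eq j, hv.2.2.2, inner_sum]
    refine Finset.sum_eq_zero fun t _ => ?_
    rw [inner_smul_right, ← inner_conj_symm, h0 t, map_zero, mul_zero]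
  exact (hw.1 j).ne' (Complex.ofReal_eq_zero.1 hτ)

theorem IsDSVD3.le_of_isDSVD3_const {s : ℝ} {v : ι → T3 A B C} {σ : κ → ℝ}
    {w : κ → T3 A B C} (hv : IsDSVD3 T (fun _ => s) v) (hs : 0 ≤ s) (hw : IsDSVD3 T σ w)
    (j : κ) : σ j ≤ s :=
  calc σ j = (inner ℂ (w j) T).re := by rw [hw.inner_eq j, Complex.ofReal_re]
    _ ≤ ‖inner ℂ (w j) T‖ := Complex.re_le_norm _
    _ ≤ s * ‖w j‖ := hv.norm_inner_le hs (hw.2.1 j)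
    _ = s := by rw [hw.2.2.1.1 j, mul_one]

theorem IsDSVD3.eq_of_isDSVD3_const {s : ℝ} {v : ι → T3 A B C} {σ : κ → ℝ}
    {w : κ → T3 A B C} (hv : IsDSVD3 T (fun _ => s) v) (hw : IsDSVD3 T σ w) (j : κ) :
    σ j = s := by
  obtain ⟨t, ht⟩ := hv.exists_inner_ne_zero hw j
  have hσ_le := hv.le_of_isDSVD3_const (hv.1 t).le hw
  have hpair : s ≤ ∑ i, σ i * ‖inner ℂ (v t) (w i)‖ :=
    calc s = (∑ i, (σ i : ℂ) * inner ℂ (v t) (w i)).re := by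
          simp_rw [← inner_smul_right, ← inner_sum, ← hw.2.2.2, hv.inner_eq, Complex.ofReal_re]
      _ ≤ ∑ i, σ i * ‖inner ℂ (v t) (w i)‖ := (Complex.re_le_norm _).trans <|
          (norm_sum_le _ _).trans_eq <| Finset.sum_congr rfl fun i _ => by
            rw [norm_mul, Complex.norm_real, Real.norm_of_nonneg (hw.1 i).le]
  have hcol : ∑ i, ‖inner ℂ (v t) (w i)‖ ≤ 1 := by
    simpa only [norm_inner_symm] using hw.2.2.1.sum_norm_inner_le_one (hv.2.1 t) (hv.2.2.1.1 t)
  have hslack : ∑ i, (s - σ i) * ‖inner ℂ (v t) (w i)‖ = 0 := by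
    refine le_antisymm ?_ (Finset.sum_nonneg fun i _ =>
      mul_nonneg (sub_nonneg.2 (hσ_le i)) (norm_nonneg _))
    simp only [sub_mul, Finset.sum_sub_distrib, ← Finset.mul_sum]
    nlinarith [hv.1 t]
  have hj := (Finset.sum_eq_zero_iff_of_nonneg fun i _ =>
    mul_nonneg (sub_nonneg.2 (hσ_le i)) (norm_nonneg _)).1 hslack j (Finset.mem_univ j)
  linarith [(mul_eq_zero.1 hj).resolve_right (norm_ne_zero_iff.2 ht)]

theorem IsDSVD3.exists_eq_of_isDSVD3_const {s : ℝ} {v : ι → T3 A B C} {w : κ → T3 A B C}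
    (hv : IsDSVD3 T (fun _ => s) v)
    (hrigid : ∀ u, IsPure3 u → ∑ t, ‖inner ℂ (v t) u‖ = ‖u‖ →
      (support fun t => inner ℂ (v t) u).Subsingleton)
    (hw : IsDSVD3 T (fun _ => s) w) (j : κ) : ∃ t, w j = v t := by
  obtain ⟨t₀, ht₀⟩ := hv.exists_inner_ne_zero hw j
  have hsum : ∑ t, inner ℂ (w j) (v t) = 1 := by
    have h := hw.inner_eq j
    rw [hv.2.2.2, inner_sum] at h
    simp_rw [inner_smul_right, ← Finset.mul_sum] at h
    exact mul_left_cancel₀ (Complex.ofReal_ne_zero.2 (hv.1 t₀).ne') (h.trans (mul_one _).symm)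
  have hnorm : ∑ t, ‖inner ℂ (v t) (w j)‖ = ‖w j‖ := by
    refine le_antisymm (hv.2.2.1.sum_norm_inner_le (hw.2.1 j)) ?_
    calc ‖w j‖ = (∑ t, inner ℂ (w j) (v t)).re := by rw [hsum, hw.2.2.1.1 j, Complex.one_re]
      _ ≤ ∑ t, ‖inner ℂ (v t) (w j)‖ := (Complex.re_le_norm _).trans <|
          (norm_sum_le _ _).trans_eq <| Finset.sum_congr rfl fun t _ => norm_inner_symm _ _
  have hsupp := hrigid _ (hw.2.1 j) hnorm
  rw [Finset.sum_eq_single t₀ (fun t _ ht => inner_eq_zero_symm.1 ?_) (by simp)] at hsum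
  · exact ⟨t₀, (inner_eq_one_iff_of_norm_eq_one (hw.2.2.1.1 j) (hv.2.2.1.1 t₀)).1 hsum⟩
  · by_contra hne
    exact ht (hsupp hne ht₀)

theorem IsDSVD3.exists_equiv_smul_eq {s : ℝ} {v : ι → T3 A B C} {σ : κ → ℝ}
    {w : κ → T3 A B C} (hv : IsDSVD3 T (fun _ => s) v)
    (hrigid : ∀ u, IsPure3 u → ∑ t, ‖inner ℂ (v t) u‖ = ‖u‖ →
      (support fun t => inner ℂ (v t) u).Subsingleton)
    (hw : IsDSVD3 T σ w) : ∃ e : κ ≃ ι, ∀ j, (σ j : ℂ) • w j = (s : ℂ) • v (e j) := by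
  obtain rfl : σ = fun _ => s := funext (hv.eq_of_isDSVD3_const hw)
  choose f hf using hv.exists_eq_of_isDSVD3_const hrigid hw
  have hinj : Injective f := fun i j hij =>
    hw.orthonormal.linearIndependent.injective (by rw [hf, hf, hij])
  have hsurj : Surjective f := fun t => by
    obtain ⟨j, hj⟩ := hw.exists_inner_ne_zero hv t
    rw [hf j] at hj
    exact ⟨j, by_contra fun hne => hj (hv.orthonormal.2 hne)⟩
  exact ⟨Equiv.ofBijective f ⟨hinj, hsurj⟩, fun j => by rw [hf j]; rfl⟩

end DSVD

section OrthonormalTriple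

variable {𝕜 E ι : Type*} [RCLike 𝕜] [NormedAddCommGroup E] [InnerProductSpace 𝕜 E] {e : ι → E}

theorem Orthonormal.norm_inner_le (he : Orthonormal 𝕜 e) (t : ι) (x : E) :
    ‖inner 𝕜 (e t) x‖ ≤ ‖x‖ :=
  (norm_inner_le_norm _ _).trans_eq (by rw [he.1 t, one_mul])

variable [Fintype ι]

theorem Orthonormal.sum_norm_inner_mul_le (he : Orthonormal 𝕜 e) (a b : E) :
    ∑ t, ‖inner 𝕜 (e t) a‖ * ‖inner 𝕜 (e t) b‖ ≤ ‖a‖ * ‖b‖ := by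
  refine (pow_le_pow_iff_left₀ (Finset.sum_nonneg fun _ _ => by positivity) (by positivity)
    two_ne_zero).1 ?_
  calc (∑ t, ‖inner 𝕜 (e t) a‖ * ‖inner 𝕜 (e t) b‖) ^ 2
      ≤ (∑ t, ‖inner 𝕜 (e t) a‖ ^ 2) * ∑ t, ‖inner 𝕜 (e t) b‖ ^ 2 :=
        Finset.sum_mul_sq_le_sq_mul_sq _ _ _
    _ ≤ ‖a‖ ^ 2 * ‖b‖ ^ 2 :=
        mul_le_mul (he.sum_inner_products_le a) (he.sum_inner_products_le b)
          (Finset.sum_nonneg fun _ _ => by positivity) (by positivity)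
    _ = (‖a‖ * ‖b‖) ^ 2 := (mul_pow _ _ _).symm

theorem Orthonormal.sum_norm_inner_mul_mul_le (he : Orthonormal 𝕜 e) (a b c : E) :
    ∑ t, ‖inner 𝕜 (e t) a‖ * ‖inner 𝕜 (e t) b‖ * ‖inner 𝕜 (e t) c‖ ≤ ‖a‖ * ‖b‖ * ‖c‖ :=
  calc _ ≤ ∑ t, ‖inner 𝕜 (e t) a‖ * ‖inner 𝕜 (e t) b‖ * ‖c‖ := by
        gcongr with t; exact he.norm_inner_le t c
    _ = (∑ t, ‖inner 𝕜 (e t) a‖ * ‖inner 𝕜 (e t) b‖) * ‖c‖ := (Finset.sum_mul _ _ _).symm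
    _ ≤ ‖a‖ * ‖b‖ * ‖c‖ := by gcongr; exact he.sum_norm_inner_mul_le a b

theorem Orthonormal.support_subsingleton_of_sum_norm_inner_mul_mul_eq (he : Orthonormal 𝕜 e)
    {a b c : E}
    (h : ∑ t, ‖inner 𝕜 (e t) a‖ * ‖inner 𝕜 (e t) b‖ * ‖inner 𝕜 (e t) c‖ = ‖a‖ * ‖b‖ * ‖c‖) :
    (support fun t => ‖inner 𝕜 (e t) a‖ * ‖inner 𝕜 (e t) b‖ * ‖inner 𝕜 (e t) c‖).Subsingleton := by
  classical
  have hslack_nonneg : ∀ t,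
      0 ≤ ‖inner 𝕜 (e t) a‖ * ‖inner 𝕜 (e t) b‖ * (‖c‖ - ‖inner 𝕜 (e t) c‖) :=
    fun t => mul_nonneg (by positivity) (sub_nonneg.2 (he.norm_inner_le t c))
  -- equality in the first step of `sum_norm_inner_mul_mul_le`
  have hslack : ∑ t, ‖inner 𝕜 (e t) a‖ * ‖inner 𝕜 (e t) b‖ * (‖c‖ - ‖inner 𝕜 (e t) c‖) = 0 := by
    refine le_antisymm ?_ (Finset.sum_nonneg fun t _ => hslack_nonneg t)
    simp only [mul_sub, Finset.sum_sub_distrib, h, ← Finset.sum_mul]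
    nlinarith [he.sum_norm_inner_mul_le a b, norm_nonneg c]
  have hγ : ∀ t ∈ support fun t => ‖inner 𝕜 (e t) a‖ * ‖inner 𝕜 (e t) b‖ * ‖inner 𝕜 (e t) c‖,
      ‖inner 𝕜 (e t) c‖ = ‖c‖ := fun t ht => by
    have h0 := (Finset.sum_eq_zero_iff_of_nonneg fun t _ => hslack_nonneg t).1 hslack t
      (Finset.mem_univ t)
    have hab : ‖inner 𝕜 (e t) a‖ * ‖inner 𝕜 (e t) b‖ ≠ 0 := left_ne_zero_of_mul ht
    linarith [(mul_eq_zero.1 h0).resolve_left hab]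
  intro t₁ h₁ t₂ h₂
  by_contra hne
  -- Bessel: two coefficients of full size `‖c‖` force `c = 0`
  have hpair := Finset.sum_le_sum_of_subset_of_nonneg (f := fun t => ‖inner 𝕜 (e t) c‖ ^ 2)
    (Finset.subset_univ {t₁, t₂}) fun _ _ _ => by positivity
  rw [Finset.sum_pair hne, hγ t₁ h₁, hγ t₂ h₂] at hpair
  have hc : ‖c‖ = 0 := by nlinarith [he.sum_inner_products_le (s := Finset.univ) c, norm_nonneg c]
  exact h₁ (by simp only [hγ t₁ h₁, hc, mul_zero])

end OrthonormalTriple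

section Cubes

variable {A ι : Type*} [Fintype A] [Fintype ι] {e : ι → EuclideanSpace ℂ A}

theorem Orthonormal.sum_norm_inner_pure3_le (he : Orthonormal ℂ e) {u : T3 A A A}
    (hu : IsPure3 u) : ∑ t, ‖inner ℂ (pure3 (e t) (e t) (e t)) u‖ ≤ ‖u‖ := by
  obtain ⟨a, b, c, rfl⟩ := hu.exists_eq_pure3
  simpa only [inner_pure3, norm_mul, norm_pure3] using he.sum_norm_inner_mul_mul_le a b c

theorem Orthonormal.support_inner_pure3_subsingleton (he : Orthonormal ℂ e) {u : T3 A A A}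
    (hu : IsPure3 u) (h : ∑ t, ‖inner ℂ (pure3 (e t) (e t) (e t)) u‖ = ‖u‖) :
    (support fun t => inner ℂ (pure3 (e t) (e t) (e t)) u).Subsingleton := by
  obtain ⟨a, b, c, rfl⟩ := hu.exists_eq_pure3
  simp only [inner_pure3, norm_mul, norm_pure3] at h
  convert he.support_subsingleton_of_sum_norm_inner_mul_mul_eq h using 1
  ext t
  simp [inner_pure3]

theorem Orthonormal.isDSVD3_sum_pure3 [Nonempty ι] (he : Orthonormal ℂ e) {s : ℝ} (hs : 0 < s) :
    IsDSVD3 (∑ t, (s : ℂ) • pure3 (e t) (e t) (e t)) (fun _ => s)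
      fun t => pure3 (e t) (e t) (e t) :=
  ⟨fun _ => hs, fun _ => isPure3_pure3 _ _ _,
    tOrtho3_two_of_sum_norm_inner_le (fun t => by rw [norm_pure3, he.1 t, one_mul, one_mul])
      (fun _ => isPure3_pure3 _ _ _) fun _ hu => he.sum_norm_inner_pure3_le hu,
    rfl⟩

end Cubes

section DiscreteFourierTransform

theorem ofReal_sqrt_natCast_sq (n : ℕ) : ((Real.sqrt n : ℝ) : ℂ) ^ 2 = n := by
  rw [← Complex.ofReal_pow, Real.sq_sqrt n.cast_nonneg, Complex.ofReal_natCast]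

variable (n : ℕ) [NeZero n]

theorem dftVec_apply (t i : ZMod n) :
    dftVec n t i = ZMod.stdAddChar (t * i) / (Real.sqrt n : ℂ) := by
  have hcast : ((t.val * i.val : ℕ) : ZMod n) = t * i := by simp
  rw [dftVec, ← hcast, ZMod.stdAddChar_apply, ZMod.toCircle_natCast, ← Complex.exp_nat_mul]
  congr 2
  push_cast
  ring

theorem orthonormal_dftVec :
    Orthonormal ℂ fun t => (WithLp.toLp 2 (dftVec n t) : EuclideanSpace ℂ (ZMod n)) := by
  rw [orthonormal_iff_ite]
  intro s t
  have hterm : ∀ i : ZMod n, dftVec n t i * (starRingEnd ℂ) (dftVec n s i)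
      = ZMod.stdAddChar (i * (t - s)) / n := fun i => by
    rw [dftVec_apply, dftVec_apply, map_div₀, Complex.conj_ofReal, ← AddChar.map_neg_eq_conj,
      div_mul_div_comm, ← AddChar.map_add_eq_mul, ← sq, ofReal_sqrt_natCast_sq]
    ring_nf
  simp only [PiLp.inner_apply, RCLike.inner_apply, hterm, ← Finset.sum_div,
    AddChar.sum_mulShift _ (ZMod.isPrimitive_stdAddChar n), ZMod.card, sub_eq_zero, eq_comm]
  split_ifs <;> simp [NeZero.ne]

theorem cycTensor_eq_sum_dftPure : cycTensor n = ∑ t, (Real.sqrt n : ℂ) • dftPure n t := by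
  ext ⟨i, j, k⟩
  have hterm : ∀ t : ZMod n, (Real.sqrt n : ℂ) * (dftVec n t i * dftVec n t j * dftVec n t k)
      = ZMod.stdAddChar (t * (i + j + k)) / n := fun t => by
    have hsqrt : (Real.sqrt n : ℂ) ≠ 0 := by simp [NeZero.ne]
    rw [dftVec_apply, dftVec_apply, dftVec_apply, mul_add, mul_add, AddChar.map_add_eq_mul,
      AddChar.map_add_eq_mul, ← ofReal_sqrt_natCast_sq]
    field_simp
  simp only [cycTensor, dftPure, pure3, WithLp.ofLp_sum, Finset.sum_apply, PiLp.smul_apply,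
    smul_eq_mul, hterm, ← Finset.sum_div, AddChar.sum_mulShift _ (ZMod.isPrimitive_stdAddChar n),
    ZMod.card]
  split_ifs <;> simp [NeZero.ne]

end DiscreteFourierTransform

/-- **Theorem 1.12.** The discrete Fourier transform decomposition
`T_{C_n} = ∑_{t=0}^{n-1} √n (n^{-1/2} ∑ᵢ ζ^{t i} xⁱ) ⊗ (n^{-1/2} ∑ⱼ ζ^{t j} xʲ) ⊗ (n^{-1/2} ∑ₖ ζ^{t k} xᵏ)`
is the unique diagonal singular value decomposition of `T_{C_n}`; in particular the singular
values of `T_{C_n}` are `√n` with multiplicity `n`, and `‖T_{C_n}‖⋆ = n√n`. -/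
theorem cycTensor_dft_unique_DSVD (n : ℕ) [NeZero n] :
    IsDSVD3 (cycTensor n) (fun _ : ZMod n => Real.sqrt n) (dftPure n) ∧
    (∀ (κ : Type) (_ : Fintype κ) (σ : κ → ℝ) (w : κ → T3 (ZMod n) (ZMod n) (ZMod n)),
      IsDSVD3 (cycTensor n) σ w →
        ∃ e : κ ≃ ZMod n, ∀ j, (σ j : ℂ) • w j = (Real.sqrt n : ℂ) • dftPure n (e j)) ∧
    nuclearNorm3 (cycTensor n) = n * Real.sqrt n := by
  have hdsvd : IsDSVD3 (cycTensor n) (fun _ : ZMod n => Real.sqrt n) (dftPure n) := by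
    rw [cycTensor_eq_sum_dftPure]
    exact (orthonormal_dftVec n).isDSVD3_sum_pure3
      (Real.sqrt_pos.2 (by exact_mod_cast NeZero.pos n))
  refine ⟨hdsvd, fun κ _ σ w hw => hdsvd.exists_equiv_smul_eq (fun u hu => ?_) hw, ?_⟩
  · exact (orthonormal_dftVec n).support_inner_pure3_subsingleton hu
  · rw [hdsvd.nuclearNorm3_eq, Finset.sum_const, Finset.card_univ, ZMod.card, nsmul_eq_mul]
end
end
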